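/- arXiv:2007.02497 — 3 statements merged into one kernel-verified Lean document; each statement's English description precedes it below -/
import Mathlib

section
/- Every antisymmetric β : Fin 7 → Fin 7 → ℝ can be written uniquely as β_{ab} = ∑_{k} X_k φ_{kab} + γ_{ab}, where X ∈ ℝ⁷ and γ is antisymmetric with ∑_{i,j} γ_{ij} φ_{ijk} = 0 for all k; moreover X is given explicitly by X_k = (1/6) ∑_{i,j} β_{ij} φ_{ijk}. (This is the splitting Ω² = Ω²₇ ⊕ Ω²₁₄, and the algebraic content of Proposition 2.2: the Ω²₇-component of a 2-form β equals (1/3)·w⌟φ where w_k = (1/2)∑ β_{ij} φ_{ijk}.) -/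
open scoped BigOperators

/-- Antisymmetrized elementary tensor on `ℝ⁷`: value `sign σ` at `v ∘ σ`, zero elsewhere. -/
noncomputable def altE {n : ℕ} (v w : Fin n → Fin 7) : ℝ :=
  ∑ σ : Equiv.Perm (Fin n), ((Equiv.Perm.sign σ : ℤ) : ℝ) * (if w = v ∘ σ then 1 else 0)

/-- The G₂ 3-form `φ = e^{123}+e^{145}−e^{167}+e^{246}+e^{257}+e^{347}−e^{356}` (0-indexed). -/
noncomputable def phi (i j k : Fin 7) : ℝ :=
  altE ![0,1,2] ![i,j,k] + altE ![0,3,4] ![i,j,k] - altE ![0,5,6] ![i,j,k]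
    + altE ![1,3,5] ![i,j,k] + altE ![1,4,6] ![i,j,k] + altE ![2,3,6] ![i,j,k]
    - altE ![2,4,5] ![i,j,k]

/-- The dual 4-form `ψ = ∗φ = −e^{4567}−e^{2367}+e^{2345}−e^{1357}−e^{1346}−e^{1256}+e^{1247}`
(0-indexed). -/
noncomputable def psi (i j k l : Fin 7) : ℝ :=
  - altE ![3,4,5,6] ![i,j,k,l] - altE ![1,2,5,6] ![i,j,k,l] + altE ![1,2,3,4] ![i,j,k,l]
    - altE ![0,2,4,6] ![i,j,k,l] - altE ![0,2,3,5] ![i,j,k,l] - altE ![0,1,4,5] ![i,j,k,l]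
    + altE ![0,1,3,6] ![i,j,k,l]

/-- Kronecker delta on `Fin 7`. -/
noncomputable def kdelta (i j : Fin 7) : ℝ := if i = j then 1 else 0

/-!
Contracting `X ⌟ φ` back against `φ` returns `6 X`, because `∑_{ij} φ_{ija} φ_{ijb} = 6 δ_{ab}`.
So in any splitting `β = X ⌟ φ + γ` with `γ ⌟ φ = 0` one must have `6 X = β ⌟ φ`, and conversely
`X := (1/6) β ⌟ φ`, `γ := β - X ⌟ φ` is such a splitting. Only the total antisymmetry of `φ`
and this normalisation enter, and both are finite checks.
-/

section Splitting

variable {ι K : Type*} [Fintype ι] [Field K]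

def interiorProduct (T : ι → ι → ι → K) (X : ι → K) (a b : ι) : K := ∑ k, X k * T k a b

def contraction (T : ι → ι → ι → K) (β : ι → ι → K) (k : ι) : K := ∑ i, ∑ j, β i j * T i j k

variable {T : ι → ι → ι → K}

theorem interiorProduct_antisymm (hanti : ∀ i j k, T i j k = -T i k j) (X : ι → K) (a b : ι) :
    interiorProduct T X a b = -interiorProduct T X b a := by
  simp only [interiorProduct, hanti _ a b, mul_neg, Finset.sum_neg_distrib]

variable [DecidableEq ι] {c : K}

theorem contraction_interiorProduct (hcyc : ∀ i j k, T i j k = T j k i)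
    (hnorm : ∀ a b, ∑ i, ∑ j, T i j a * T i j b = if a = b then c else 0) (X : ι → K) (k : ι) :
    contraction T (interiorProduct T X) k = c * X k := by
  calc contraction T (interiorProduct T X) k
      = ∑ i, ∑ j, ∑ m, X m * (T i j m * T i j k) := by
        simp only [contraction, interiorProduct, Finset.sum_mul]
        refine Finset.sum_congr rfl fun i _ => Finset.sum_congr rfl fun j _ => ?_
        refine Finset.sum_congr rfl fun m _ => ?_
        rw [hcyc m i j, mul_assoc]
    _ = ∑ m, ∑ i, ∑ j, X m * (T i j m * T i j k) := Finset.sum_comm_cycle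
    _ = ∑ m, X m * if m = k then c else 0 := by simp only [← Finset.mul_sum, hnorm]
    _ = c * X k := by simp [mul_comm]

theorem contraction_eq_of_eq_add (hcyc : ∀ i j k, T i j k = T j k i)
    (hnorm : ∀ a b, ∑ i, ∑ j, T i j a * T i j b = if a = b then c else 0)
    {β γ : ι → ι → K} {X : ι → K} (h : ∀ a b, β a b = interiorProduct T X a b + γ a b) (k : ι) :
    contraction T β k = c * X k + contraction T γ k := by
  rw [← contraction_interiorProduct hcyc hnorm X k]
  simp only [contraction, h, add_mul, Finset.sum_add_distrib]

theorem eq_inv_mul_contraction_of_eq_add (hc : c ≠ 0) (hcyc : ∀ i j k, T i j k = T j k i)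
    (hnorm : ∀ a b, ∑ i, ∑ j, T i j a * T i j b = if a = b then c else 0)
    {β γ : ι → ι → K} {X : ι → K} (hγ : ∀ k, contraction T γ k = 0)
    (h : ∀ a b, β a b = interiorProduct T X a b + γ a b) (k : ι) :
    X k = c⁻¹ * contraction T β k := by
  rw [contraction_eq_of_eq_add hcyc hnorm h, hγ, add_zero, inv_mul_cancel_left₀ hc]

theorem existsUnique_interiorProduct_add (hc : c ≠ 0) (hcyc : ∀ i j k, T i j k = T j k i)
    (hanti : ∀ i j k, T i j k = -T i k j)
    (hnorm : ∀ a b, ∑ i, ∑ j, T i j a * T i j b = if a = b then c else 0)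
    {β : ι → ι → K} (hβ : ∀ i j, β i j = -β j i) :
    ∃! p : (ι → K) × (ι → ι → K), (∀ i j, p.2 i j = -p.2 j i) ∧
      (∀ k, contraction T p.2 k = 0) ∧ ∀ a b, β a b = interiorProduct T p.1 a b + p.2 a b := by
  set X : ι → K := fun k => c⁻¹ * contraction T β k
  set γ : ι → ι → K := fun a b => β a b - interiorProduct T X a b
  have hsplit : ∀ a b, β a b = interiorProduct T X a b + γ a b := fun a b => by ring
  refine ⟨(X, γ), ⟨fun i j => ?_, fun k => ?_, hsplit⟩, ?_⟩
  · simp only [γ, hβ i j, interiorProduct_antisymm hanti X i j]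
    ring
  · have := contraction_eq_of_eq_add hcyc hnorm hsplit k
    rw [mul_inv_cancel_left₀ hc] at this
    linear_combination -this
  · rintro ⟨X', γ'⟩ ⟨-, hγ', h'⟩
    have hX : X' = X := funext (eq_inv_mul_contraction_of_eq_add hc hcyc hnorm hγ' h')
    subst hX
    refine Prod.ext rfl (funext₂ fun a b => ?_)
    linear_combination (h' a b).symm + hsplit a b

end Splitting

/-- `kdeltaZ`, `gkdeltaZ` and `phiZ` are computable integer models of `kdelta`, `altE` and `phi`:
the finite identities satisfied by `phi` are checked on them by `decide`. -/
def kdeltaZ (x y : Fin 7) : ℤ := if x = y then 1 else 0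

theorem kdeltaZ_cast (x y : Fin 7) : (kdeltaZ x y : ℝ) = kdelta x y := by
  simp [kdeltaZ, kdelta, apply_ite (Int.cast : ℤ → ℝ)]

def gkdeltaZ (a b c i j k : Fin 7) : ℤ :=
  kdeltaZ i a * kdeltaZ j b * kdeltaZ k c - kdeltaZ i a * kdeltaZ j c * kdeltaZ k b
    - kdeltaZ i b * kdeltaZ j a * kdeltaZ k c + kdeltaZ i b * kdeltaZ j c * kdeltaZ k a
    + kdeltaZ i c * kdeltaZ j a * kdeltaZ k b - kdeltaZ i c * kdeltaZ j b * kdeltaZ k a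

theorem altE_eq_det {n : ℕ} (v w : Fin n → Fin 7) :
    altE v w = (Matrix.of fun m l => kdelta (w l) (v m)).det := by
  rw [altE, Matrix.det_apply]
  refine Finset.sum_congr rfl fun σ _ => ?_
  simp only [Matrix.of_apply, kdelta, Finset.prod_boole, Units.smul_def, zsmul_eq_mul]
  simp [funext_iff]

theorem altE_fin_three (a b c i j k : Fin 7) :
    altE ![a, b, c] ![i, j, k] = gkdeltaZ a b c i j k := by
  rw [altE_eq_det, Matrix.det_fin_three]
  push_cast [gkdeltaZ, kdeltaZ_cast]
  simp only [Matrix.of_apply, Matrix.cons_val_zero, Matrix.cons_val_one, Matrix.cons_val_two,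
    Matrix.vecHead, Matrix.vecTail, Function.comp_apply, Fin.succ_zero_eq_one]
  ring

def phiZ (i j k : Fin 7) : ℤ :=
  gkdeltaZ 0 1 2 i j k + gkdeltaZ 0 3 4 i j k - gkdeltaZ 0 5 6 i j k
    + gkdeltaZ 1 3 5 i j k + gkdeltaZ 1 4 6 i j k + gkdeltaZ 2 3 6 i j k
    - gkdeltaZ 2 4 5 i j k

theorem phi_eq_phiZ (i j k : Fin 7) : phi i j k = phiZ i j k := by
  simp only [phi, phiZ, altE_fin_three]
  push_cast
  ring

theorem phi_cyclic (i j k : Fin 7) : phi i j k = phi j k i := by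
  have h : ∀ i j k, phiZ i j k = phiZ j k i := by decide
  simp only [phi_eq_phiZ, h i j k]

theorem phi_antisymm (i j k : Fin 7) : phi i j k = -phi i k j := by
  have h : ∀ i j k, phiZ i j k = -phiZ i k j := by decide
  simp only [phi_eq_phiZ, h i j k, Int.cast_neg]

theorem sum_phi_mul_phi (a b : Fin 7) :
    ∑ i, ∑ j, phi i j a * phi i j b = if a = b then 6 else 0 := by
  have h : ∀ a b, ∑ i, ∑ j, phiZ i j a * phiZ i j b = if a = b then 6 else 0 := by decide
  simp only [phi_eq_phiZ]
  exact_mod_cast h a b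

/-- The splitting `Ω² = Ω²₇ ⊕ Ω²₁₄`: every antisymmetric 2-tensor `β` is uniquely
`β_{ab} = ∑_k X_k φ_{kab} + γ_{ab}` with `γ` antisymmetric satisfying `∑ γ_{ij} φ_{ijk} = 0`;
moreover `X_k = (1/6) ∑ β_{ij} φ_{ijk}`. -/
theorem two_form_splitting (β : Fin 7 → Fin 7 → ℝ)
    (hanti : ∀ i j, β i j = - β j i) :
    (∃! p : (Fin 7 → ℝ) × (Fin 7 → Fin 7 → ℝ),
      (∀ i j, p.2 i j = - p.2 j i) ∧
      (∀ k, ∑ i, ∑ j, p.2 i j * phi i j k = 0) ∧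
      (∀ a b, β a b = (∑ k, p.1 k * phi k a b) + p.2 a b)) ∧
    (∀ (X : Fin 7 → ℝ) (γ : Fin 7 → Fin 7 → ℝ),
      (∀ i j, γ i j = - γ j i) →
      (∀ k, ∑ i, ∑ j, γ i j * phi i j k = 0) →
      (∀ a b, β a b = (∑ k, X k * phi k a b) + γ a b) →
      ∀ k, X k = (1/6) * ∑ i, ∑ j, β i j * phi i j k) := by
  refine ⟨existsUnique_interiorProduct_add (by norm_num) phi_cyclic phi_antisymm sum_phi_mul_phi
    hanti, fun X γ _ hγ h k => ?_⟩
  rw [eq_inv_mul_contraction_of_eq_add (by norm_num) phi_cyclic sum_phi_mul_phi hγ h k, one_div]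
  rfl
end

section
/- Let h : Fin 7 → Fin 7 → ℝ be symmetric (h_{ij} = h_{ji}) and traceless (∑_p h_{pp} = 0), and let η be the totally antisymmetric 3-tensor with components η_{ijk} = ∑_p (h_{ip} φ_{pjk} + h_{jp} φ_{ipk} + h_{kp} φ_{ijp}). Then for all i, a ∈ {1,…,7}: ∑_{j,k} η_{ijk} φ_{ajk} = 4 h_{ia}, and for all a ∈ {1,…,7}: ∑_{i,j,k} η_{ijk} ψ_{aijk} = 0. -/
open scoped BigOperators

lemma altE_det {n : ℕ} (v w : Fin n → Fin 7) :
    altE v w = Matrix.det (Matrix.of fun t s => if w t = v s then (1:ℝ) else 0) := by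
  rw [Matrix.det_apply, altE]
  refine Fintype.sum_equiv (Equiv.inv (Equiv.Perm (Fin n))) _ _ ?_
  intro σ
  simp only [Equiv.inv_apply, Matrix.of_apply, Finset.prod_ite_eq]
  rw [Fintype.prod_boole]
  rw [Equiv.Perm.sign_inv]
  rw [Units.smul_def, zsmul_eq_mul]
  congr 1
  have hiff : (w = v ∘ ⇑σ) ↔ (∀ i : Fin n, w (σ⁻¹ i) = v i) := ?_
  · rw [if_congr hiff rfl rfl]; congr

  constructor
  · intro hwv i; rw [hwv]; simp
  · intro hi; funext t
    have := hi (σ t); simpa using this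

def kdZ (i j : Fin 7) : ℤ := if i = j then 1 else 0

def d3 (a b c i j k : Fin 7) : ℤ :=
  kdZ i a * kdZ j b * kdZ k c - kdZ i a * kdZ j c * kdZ k b
  - kdZ i b * kdZ j a * kdZ k c + kdZ i b * kdZ j c * kdZ k a
  + kdZ i c * kdZ j a * kdZ k b - kdZ i c * kdZ j b * kdZ k a

def d4 (a b c d i j k l : Fin 7) : ℤ :=
  kdZ i a * d3 b c d j k l - kdZ i b * d3 a c d j k l
  + kdZ i c * d3 a b d j k l - kdZ i d * d3 a b c j k l

lemma altE3 (a b c i j k : Fin 7) : altE ![a,b,c] ![i,j,k] = ((d3 a b c i j k : ℤ) : ℝ) := by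
  rw [altE_det, Matrix.det_fin_three]
  simp only [Matrix.of_apply, Matrix.cons_val', Matrix.cons_val_zero, Matrix.cons_val_one,
    Matrix.head_cons, Matrix.empty_val', Matrix.cons_val_fin_one, Matrix.head_fin_const,
    Matrix.cons_val_two, Matrix.tail_cons, d3, kdZ]
  push_cast
  ring!

lemma altE4 (a b c d i j k l : Fin 7) :
    altE ![a,b,c,d] ![i,j,k,l] = ((d4 a b c d i j k l : ℤ) : ℝ) := by
  rw [altE_det, Matrix.det_succ_row_zero]
  simp only [Fin.sum_univ_four, Matrix.det_fin_three, Matrix.submatrix_apply, Matrix.of_apply,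
    Matrix.cons_val', Matrix.cons_val_zero, Matrix.cons_val_one, Matrix.head_cons,
    Matrix.empty_val', Matrix.cons_val_fin_one, Matrix.head_fin_const, Matrix.cons_val_two,
    Matrix.cons_val_three, Matrix.tail_cons, Fin.succAbove, Fin.lt_def,
    show ((3:Fin 4):ℕ) = 3 from rfl, show ((2:Fin 4):ℕ) = 2 from rfl,
    show ((1:Fin 4):ℕ) = 1 from rfl, show ((0:Fin 4):ℕ) = 0 from rfl,
    show ((2:Fin 3):ℕ) = 2 from rfl, show ((1:Fin 3):ℕ) = 1 from rfl,
    show ((0:Fin 3):ℕ) = 0 from rfl,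
    show (Fin.castSucc 0 : Fin 4) = 0 from rfl, show (Fin.castSucc 1 : Fin 4) = 1 from rfl,
    show (Fin.castSucc 2 : Fin 4) = 2 from rfl,
    show (Fin.succ 0 : Fin 4) = 1 from rfl, show (Fin.succ 1 : Fin 4) = 2 from rfl,
    show (Fin.succ 2 : Fin 4) = 3 from rfl,
    Nat.reduceLT, reduceIte, pow_zero, pow_one,
    show ((-1:ℝ))^(2:ℕ) = 1 from by norm_num, show ((-1:ℝ))^(3:ℕ) = -1 from by norm_num,
    one_mul, neg_mul, neg_neg]
  push_cast [d4, d3, kdZ]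
  ring!

def phiT : Fin 7 → Fin 7 → Fin 7 → ℤ := ![![![0,0,0,0,0,0,0],![0,0,1,0,0,0,0],![0,-1,0,0,0,0,0],![0,0,0,0,1,0,0],![0,0,0,-1,0,0,0],![0,0,0,0,0,0,-1],![0,0,0,0,0,1,0]],![![0,0,-1,0,0,0,0],![0,0,0,0,0,0,0],![1,0,0,0,0,0,0],![0,0,0,0,0,1,0],![0,0,0,0,0,0,1],![0,0,0,-1,0,0,0],![0,0,0,0,-1,0,0]],![![0,1,0,0,0,0,0],![-1,0,0,0,0,0,0],![0,0,0,0,0,0,0],![0,0,0,0,0,0,1],![0,0,0,0,0,-1,0],![0,0,0,0,1,0,0],![0,0,0,-1,0,0,0]],![![0,0,0,0,-1,0,0],![0,0,0,0,0,-1,0],![0,0,0,0,0,0,-1],![0,0,0,0,0,0,0],![1,0,0,0,0,0,0],![0,1,0,0,0,0,0],![0,0,1,0,0,0,0]],![![0,0,0,1,0,0,0],![0,0,0,0,0,0,-1],![0,0,0,0,0,1,0],![-1,0,0,0,0,0,0],![0,0,0,0,0,0,0],![0,0,-1,0,0,0,0],![0,1,0,0,0,0,0]],![![0,0,0,0,0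,0,1],![0,0,0,1,0,0,0],![0,0,0,0,-1,0,0],![0,-1,0,0,0,0,0],![0,0,1,0,0,0,0],![0,0,0,0,0,0,0],![-1,0,0,0,0,0,0]],![![0,0,0,0,0,-1,0],![0,0,0,0,1,0,0],![0,0,0,1,0,0,0],![0,0,-1,0,0,0,0],![0,-1,0,0,0,0,0],![1,0,0,0,0,0,0],![0,0,0,0,0,0,0]]]

def psiT : Fin 7 → Fin 7 → Fin 7 → Fin 7 → ℤ := ![![![![0,0,0,0,0,0,0],![0,0,0,0,0,0,0],![0,0,0,0,0,0,0],![0,0,0,0,0,0,0],![0,0,0,0,0,0,0],![0,0,0,0,0,0,0],![0,0,0,0,0,0,0]],![![0,0,0,0,0,0,0],![0,0,0,0,0,0,0],![0,0,0,0,0,0,0],![0,0,0,0,0,0,1],![0,0,0,0,0,-1,0],![0,0,0,0,1,0,0],![0,0,0,-1,0,0,0]],![![0,0,0,0,0,0,0],![0,0,0,0,0,0,0],![0,0,0,0,0,0,0],![0,0,0,0,0,-1,0],![0,0,0,0,0,0,-1],![0,0,0,1,0,0,0],![0,0,0,0,1,0,0]],![![0,0,0,0,0,0,0],![0,0,0,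0,0,0,-1],![0,0,0,0,0,1,0],![0,0,0,0,0,0,0],![0,0,0,0,0,0,0],![0,0,-1,0,0,0,0],![0,1,0,0,0,0,0]],![![0,0,0,0,0,0,0],![0,0,0,0,0,1,0],![0,0,0,0,0,0,1],![0,0,0,0,0,0,0],![0,0,0,0,0,0,0],![0,-1,0,0,0,0,0],![0,0,-1,0,0,0,0]],![![0,0,0,0,0,0,0],![0,0,0,0,-1,0,0],![0,0,0,-1,0,0,0],![0,0,1,0,0,0,0],![0,1,0,0,0,0,0],![0,0,0,0,0,0,0],![0,0,0,0,0,0,0]],![![0,0,0,0,0,0,0],![0,0,0,1,0,0,0],![0,0,0,0,-1,0,0],![0,-1,0,0,0,0,0],![0,0,1,0,0,0,0],![0,0,0,0,0,0,0],![0,0,0,0,0,0,0]]],![![![0,0,0,0,0,0,0],![0,0,0,0,0,0,0],![0,0,0,0,0,0,0],![0,0,0,0,0,0,-1],![0,0,0,0,0,1,0],![0,0,0,0,-1,0,0],![0,0,0,1,0,0,0]],![![0,0,0,0,0,0,0],![0,0,0,0,0,0,0],![0,0,0,0,0,0,0],![0,0,0,0,0,0,0],![0,0,0,0,0,0,0]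,![0,0,0,0,0,0,0],![0,0,0,0,0,0,0]],![![0,0,0,0,0,0,0],![0,0,0,0,0,0,0],![0,0,0,0,0,0,0],![0,0,0,0,1,0,0],![0,0,0,-1,0,0,0],![0,0,0,0,0,0,-1],![0,0,0,0,0,1,0]],![![0,0,0,0,0,0,1],![0,0,0,0,0,0,0],![0,0,0,0,-1,0,0],![0,0,0,0,0,0,0],![0,0,1,0,0,0,0],![0,0,0,0,0,0,0],![-1,0,0,0,0,0,0]],![![0,0,0,0,0,-1,0],![0,0,0,0,0,0,0],![0,0,0,1,0,0,0],![0,0,-1,0,0,0,0],![0,0,0,0,0,0,0],![1,0,0,0,0,0,0],![0,0,0,0,0,0,0]],![![0,0,0,0,1,0,0],![0,0,0,0,0,0,0],![0,0,0,0,0,0,1],![0,0,0,0,0,0,0],![-1,0,0,0,0,0,0],![0,0,0,0,0,0,0],![0,0,-1,0,0,0,0]],![![0,0,0,-1,0,0,0],![0,0,0,0,0,0,0],![0,0,0,0,0,-1,0],![1,0,0,0,0,0,0],![0,0,0,0,0,0,0],![0,0,1,0,0,0,0],![0,0,0,0,0,0,0]]],![![![0,0,0,0,0,0,0],![0,0,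0,0,0,0,0],![0,0,0,0,0,0,0],![0,0,0,0,0,1,0],![0,0,0,0,0,0,1],![0,0,0,-1,0,0,0],![0,0,0,0,-1,0,0]],![![0,0,0,0,0,0,0],![0,0,0,0,0,0,0],![0,0,0,0,0,0,0],![0,0,0,0,-1,0,0],![0,0,0,1,0,0,0],![0,0,0,0,0,0,1],![0,0,0,0,0,-1,0]],![![0,0,0,0,0,0,0],![0,0,0,0,0,0,0],![0,0,0,0,0,0,0],![0,0,0,0,0,0,0],![0,0,0,0,0,0,0],![0,0,0,0,0,0,0],![0,0,0,0,0,0,0]],![![0,0,0,0,0,-1,0],![0,0,0,0,1,0,0],![0,0,0,0,0,0,0],![0,0,0,0,0,0,0],![0,-1,0,0,0,0,0],![1,0,0,0,0,0,0],![0,0,0,0,0,0,0]],![![0,0,0,0,0,0,-1],![0,0,0,-1,0,0,0],![0,0,0,0,0,0,0],![0,1,0,0,0,0,0],![0,0,0,0,0,0,0],![0,0,0,0,0,0,0],![1,0,0,0,0,0,0]],![![0,0,0,1,0,0,0],![0,0,0,0,0,0,-1],![0,0,0,0,0,0,0],![-1,0,0,0,0,0,0],![0,0,0,0,0,0,0]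,![0,0,0,0,0,0,0],![0,1,0,0,0,0,0]],![![0,0,0,0,1,0,0],![0,0,0,0,0,1,0],![0,0,0,0,0,0,0],![0,0,0,0,0,0,0],![-1,0,0,0,0,0,0],![0,-1,0,0,0,0,0],![0,0,0,0,0,0,0]]],![![![0,0,0,0,0,0,0],![0,0,0,0,0,0,1],![0,0,0,0,0,-1,0],![0,0,0,0,0,0,0],![0,0,0,0,0,0,0],![0,0,1,0,0,0,0],![0,-1,0,0,0,0,0]],![![0,0,0,0,0,0,-1],![0,0,0,0,0,0,0],![0,0,0,0,1,0,0],![0,0,0,0,0,0,0],![0,0,-1,0,0,0,0],![0,0,0,0,0,0,0],![1,0,0,0,0,0,0]],![![0,0,0,0,0,1,0],![0,0,0,0,-1,0,0],![0,0,0,0,0,0,0],![0,0,0,0,0,0,0],![0,1,0,0,0,0,0],![-1,0,0,0,0,0,0],![0,0,0,0,0,0,0]],![![0,0,0,0,0,0,0],![0,0,0,0,0,0,0],![0,0,0,0,0,0,0],![0,0,0,0,0,0,0],![0,0,0,0,0,0,0],![0,0,0,0,0,0,0],![0,0,0,0,0,0,0]],![![0,0,0,0,0,0,0],![0,0,1,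0,0,0,0],![0,-1,0,0,0,0,0],![0,0,0,0,0,0,0],![0,0,0,0,0,0,0],![0,0,0,0,0,0,-1],![0,0,0,0,0,1,0]],![![0,0,-1,0,0,0,0],![0,0,0,0,0,0,0],![1,0,0,0,0,0,0],![0,0,0,0,0,0,0],![0,0,0,0,0,0,1],![0,0,0,0,0,0,0],![0,0,0,0,-1,0,0]],![![0,1,0,0,0,0,0],![-1,0,0,0,0,0,0],![0,0,0,0,0,0,0],![0,0,0,0,0,0,0],![0,0,0,0,0,-1,0],![0,0,0,0,1,0,0],![0,0,0,0,0,0,0]]],![![![0,0,0,0,0,0,0],![0,0,0,0,0,-1,0],![0,0,0,0,0,0,-1],![0,0,0,0,0,0,0],![0,0,0,0,0,0,0],![0,1,0,0,0,0,0],![0,0,1,0,0,0,0]],![![0,0,0,0,0,1,0],![0,0,0,0,0,0,0],![0,0,0,-1,0,0,0],![0,0,1,0,0,0,0],![0,0,0,0,0,0,0],![-1,0,0,0,0,0,0],![0,0,0,0,0,0,0]],![![0,0,0,0,0,0,1],![0,0,0,1,0,0,0],![0,0,0,0,0,0,0],![0,-1,0,0,0,0,0],![0,0,0,0,0,0,0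],![0,0,0,0,0,0,0],![-1,0,0,0,0,0,0]],![![0,0,0,0,0,0,0],![0,0,-1,0,0,0,0],![0,1,0,0,0,0,0],![0,0,0,0,0,0,0],![0,0,0,0,0,0,0],![0,0,0,0,0,0,1],![0,0,0,0,0,-1,0]],![![0,0,0,0,0,0,0],![0,0,0,0,0,0,0],![0,0,0,0,0,0,0],![0,0,0,0,0,0,0],![0,0,0,0,0,0,0],![0,0,0,0,0,0,0],![0,0,0,0,0,0,0]],![![0,-1,0,0,0,0,0],![1,0,0,0,0,0,0],![0,0,0,0,0,0,0],![0,0,0,0,0,0,-1],![0,0,0,0,0,0,0],![0,0,0,0,0,0,0],![0,0,0,1,0,0,0]],![![0,0,-1,0,0,0,0],![0,0,0,0,0,0,0],![1,0,0,0,0,0,0],![0,0,0,0,0,1,0],![0,0,0,0,0,0,0],![0,0,0,-1,0,0,0],![0,0,0,0,0,0,0]]],![![![0,0,0,0,0,0,0],![0,0,0,0,1,0,0],![0,0,0,1,0,0,0],![0,0,-1,0,0,0,0],![0,-1,0,0,0,0,0],![0,0,0,0,0,0,0],![0,0,0,0,0,0,0]],![![0,0,0,0,-1,0,0],![0,0,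0,0,0,0,0],![0,0,0,0,0,0,-1],![0,0,0,0,0,0,0],![1,0,0,0,0,0,0],![0,0,0,0,0,0,0],![0,0,1,0,0,0,0]],![![0,0,0,-1,0,0,0],![0,0,0,0,0,0,1],![0,0,0,0,0,0,0],![1,0,0,0,0,0,0],![0,0,0,0,0,0,0],![0,0,0,0,0,0,0],![0,-1,0,0,0,0,0]],![![0,0,1,0,0,0,0],![0,0,0,0,0,0,0],![-1,0,0,0,0,0,0],![0,0,0,0,0,0,0],![0,0,0,0,0,0,-1],![0,0,0,0,0,0,0],![0,0,0,0,1,0,0]],![![0,1,0,0,0,0,0],![-1,0,0,0,0,0,0],![0,0,0,0,0,0,0],![0,0,0,0,0,0,1],![0,0,0,0,0,0,0],![0,0,0,0,0,0,0],![0,0,0,-1,0,0,0]],![![0,0,0,0,0,0,0],![0,0,0,0,0,0,0],![0,0,0,0,0,0,0],![0,0,0,0,0,0,0],![0,0,0,0,0,0,0],![0,0,0,0,0,0,0],![0,0,0,0,0,0,0]],![![0,0,0,0,0,0,0],![0,0,-1,0,0,0,0],![0,1,0,0,0,0,0],![0,0,0,0,-1,0,0],![0,0,0,1,0,0,0],!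[0,0,0,0,0,0,0],![0,0,0,0,0,0,0]]],![![![0,0,0,0,0,0,0],![0,0,0,-1,0,0,0],![0,0,0,0,1,0,0],![0,1,0,0,0,0,0],![0,0,-1,0,0,0,0],![0,0,0,0,0,0,0],![0,0,0,0,0,0,0]],![![0,0,0,1,0,0,0],![0,0,0,0,0,0,0],![0,0,0,0,0,1,0],![-1,0,0,0,0,0,0],![0,0,0,0,0,0,0],![0,0,-1,0,0,0,0],![0,0,0,0,0,0,0]],![![0,0,0,0,-1,0,0],![0,0,0,0,0,-1,0],![0,0,0,0,0,0,0],![0,0,0,0,0,0,0],![1,0,0,0,0,0,0],![0,1,0,0,0,0,0],![0,0,0,0,0,0,0]],![![0,-1,0,0,0,0,0],![1,0,0,0,0,0,0],![0,0,0,0,0,0,0],![0,0,0,0,0,0,0],![0,0,0,0,0,1,0],![0,0,0,0,-1,0,0],![0,0,0,0,0,0,0]],![![0,0,1,0,0,0,0],![0,0,0,0,0,0,0],![-1,0,0,0,0,0,0],![0,0,0,0,0,-1,0],![0,0,0,0,0,0,0],![0,0,0,1,0,0,0],![0,0,0,0,0,0,0]],![![0,0,0,0,0,0,0],![0,0,1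,0,0,0,0],![0,-1,0,0,0,0,0],![0,0,0,0,1,0,0],![0,0,0,-1,0,0,0],![0,0,0,0,0,0,0],![0,0,0,0,0,0,0]],![![0,0,0,0,0,0,0],![0,0,0,0,0,0,0],![0,0,0,0,0,0,0],![0,0,0,0,0,0,0],![0,0,0,0,0,0,0],![0,0,0,0,0,0,0],![0,0,0,0,0,0,0]]]]

def phiE (i j k : Fin 7) : ℤ :=
  d3 0 1 2 i j k + d3 0 3 4 i j k - d3 0 5 6 i j k + d3 1 3 5 i j k + d3 1 4 6 i j k
    + d3 2 3 6 i j k - d3 2 4 5 i j k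

def psiE (i j k l : Fin 7) : ℤ :=
  - d4 3 4 5 6 i j k l - d4 1 2 5 6 i j k l + d4 1 2 3 4 i j k l - d4 0 2 4 6 i j k l
    - d4 0 2 3 5 i j k l - d4 0 1 4 5 i j k l + d4 0 1 3 6 i j k l

set_option maxHeartbeats 1600000 in
lemma phiE_eq : ∀ i j k, phiE i j k = phiT i j k := by decide

set_option maxHeartbeats 12800000 in
lemma psiE_eq : ∀ i j k l, psiE i j k l = psiT i j k l := by decide

lemma phi_cast (i j k : Fin 7) : phi i j k = ((phiT i j k : ℤ) : ℝ) := by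
  rw [← phiE_eq, phiE]
  simp only [phi, altE3]
  push_cast
  ring

lemma psi_cast (i j k l : Fin 7) : psi i j k l = ((psiT i j k l : ℤ) : ℝ) := by
  rw [← psiE_eq, psiE]
  simp only [psi, altE4]
  push_cast
  ring

lemma kdelta_cast (i j : Fin 7) : kdelta i j = ((kdZ i j : ℤ) : ℝ) := by
  simp [kdelta, kdZ]

set_option maxHeartbeats 1600000 in
lemma k1Z : ∀ p a : Fin 7, (∑ j, ∑ k, phiT p j k * phiT a j k) = 6 * kdZ p a := by decide

set_option maxHeartbeats 6400000 in
lemma k2Z : ∀ i p a j : Fin 7, (∑ k, phiT i p k * phiT a j k)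
    = kdZ i a * kdZ p j - kdZ i j * kdZ p a + psiT i p a j := by decide

set_option maxHeartbeats 6400000 in
lemma k3aZ : ∀ p a i : Fin 7, (∑ j, ∑ k, phiT p j k * psiT a i j k) = 4 * phiT a i p := by decide

set_option maxHeartbeats 6400000 in
lemma k3bZ : ∀ p a j : Fin 7, (∑ i, ∑ k, phiT i p k * psiT a i j k) = 4 * phiT a j p := by decide

set_option maxHeartbeats 6400000 in
lemma k3cZ : ∀ p a k : Fin 7, (∑ i, ∑ j, phiT i j p * psiT a i j k) = 4 * phiT a k p := by decide

lemma phiT_anti : ∀ a i p : Fin 7, phiT a i p = - phiT a p i := by decide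
lemma psiT_anti : ∀ i p a j : Fin 7, psiT i p a j = - psiT i j a p := by decide

lemma K1 (p a : Fin 7) : ∑ j, ∑ k, phi p j k * phi a j k = 6 * kdelta p a := by
  simp only [phi_cast, kdelta_cast]
  exact_mod_cast k1Z p a

lemma K2 (i p a j : Fin 7) : ∑ k, phi i p k * phi a j k
    = kdelta i a * kdelta p j - kdelta i j * kdelta p a + psi i p a j := by
  simp only [phi_cast, psi_cast, kdelta_cast]
  exact_mod_cast k2Z i p a j

lemma K3a (p a i : Fin 7) : ∑ j, ∑ k, phi p j k * psi a i j k = 4 * phi a i p := by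
  simp only [phi_cast, psi_cast]
  exact_mod_cast k3aZ p a i

lemma K3b (p a j : Fin 7) : ∑ i, ∑ k, phi i p k * psi a i j k = 4 * phi a j p := by
  simp only [phi_cast, psi_cast]
  exact_mod_cast k3bZ p a j

lemma K3c (p a k : Fin 7) : ∑ i, ∑ j, phi i j p * psi a i j k = 4 * phi a k p := by
  simp only [phi_cast, psi_cast]
  exact_mod_cast k3cZ p a k

lemma phi_anti (a i p : Fin 7) : phi a i p = - phi a p i := by
  simp only [phi_cast, phiT_anti a i p]
  push_cast
  ring

lemma psi_anti (i p a j : Fin 7) : psi i p a j = - psi i j a p := by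
  simp only [psi_cast, psiT_anti i p a j]
  push_cast
  ring

lemma sym_anti (f g : Fin 7 → Fin 7 → ℝ) (hf : ∀ p j, f p j = f j p)
    (hg : ∀ p j, g p j = - g j p) : ∑ p, ∑ j, f p j * g p j = 0 := by
  have h1 : (∑ p, ∑ j, f p j * g p j) = - ∑ p, ∑ j, f p j * g p j := by
    nth_rewrite 1 [Finset.sum_comm]
    rw [← Finset.sum_neg_distrib]
    refine Finset.sum_congr rfl fun j _ => ?_
    rw [← Finset.sum_neg_distrib]
    refine Finset.sum_congr rfl fun p _ => ?_
    rw [hf j p, hg j p]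
    ring
  linarith

lemma swapB (F : Fin 7 → Fin 7 → Fin 7 → ℝ) :
    (∑ j, ∑ k, ∑ p, F j k p) = ∑ j, ∑ p, ∑ k, F j k p :=
  Finset.sum_congr rfl fun _ _ => Finset.sum_comm

lemma swapA (F : Fin 7 → Fin 7 → Fin 7 → ℝ) :
    (∑ j, ∑ k, ∑ p, F j k p) = ∑ p, ∑ j, ∑ k, F j k p := by
  rw [swapB]
  exact Finset.sum_comm

lemma delta_sum (c : ℝ) (f : Fin 7 → ℝ) (a : Fin 7) :
    (∑ p, f p * (c * kdelta p a)) = c * f a := by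
  have e : ∀ p, f p * (c * kdelta p a) = if p = a then c * f p else 0 := by
    intro p
    by_cases hc : p = a <;> simp [kdelta, hc] <;> ring
  simp [e, Finset.sum_ite_eq']

lemma helper2 (h : Fin 7 → Fin 7 → ℝ) (hsym : ∀ i j, h i j = h j i) (htr : ∑ p, h p p = 0)
    (i a : Fin 7) :
    (∑ j, ∑ p, h j p * (kdelta i a * kdelta p j - kdelta i j * kdelta p a + psi i p a j))
      = - h i a := by
  have e : ∀ j p, h j p * (kdelta i a * kdelta p j - kdelta i j * kdelta p a + psi i p a j)
      = h j p * (kdelta i a * kdelta p j) - h j p * (kdelta i j * kdelta p a)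
        + h j p * psi i p a j := by
    intro j p; ring
  simp only [e, Finset.sum_add_distrib, Finset.sum_sub_distrib]
  have S0 : (∑ j, ∑ p, h j p * psi i p a j) = 0 := by
    refine sym_anti (fun j p => h j p) (fun j p => psi i p a j) (fun p j => hsym p j) ?_
    intro p j
    exact psi_anti i j a p
  have S1 : (∑ j, ∑ p, h j p * (kdelta i a * kdelta p j)) = 0 := by
    have e1 : ∀ j, (∑ p, h j p * (kdelta i a * kdelta p j)) = kdelta i a * h j j := by
      intro j
      rw [delta_sum (kdelta i a) (h j) j]
    simp only [e1, ← Finset.mul_sum, htr, mul_zero]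
  have S2 : (∑ j, ∑ p, h j p * (kdelta i j * kdelta p a)) = h i a := by
    have e1 : ∀ j, (∑ p, h j p * (kdelta i j * kdelta p a)) = kdelta i j * h j a := by
      intro j
      rw [delta_sum (kdelta i j) (h j) a]
    have e2 : ∀ j, kdelta i j * h j a = if i = j then h j a else 0 := by
      intro j
      by_cases hc : i = j <;> simp [kdelta, hc]
    simp only [e1, e2, Finset.sum_ite_eq, Finset.mem_univ, if_true]
  rw [S0, S1, S2]
  ring

/-- Contractions of `η = i_φ(h)` (for `h` symmetric traceless) with `φ` and `ψ`:
`η_{ijk} φ_{ajk} = 4 h_{ia}` and `η_{ijk} ψ_{aijk} = 0`. -/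
theorem iphi_contractions (h : Fin 7 → Fin 7 → ℝ)
    (hsym : ∀ i j, h i j = h j i) (htr : ∑ p, h p p = 0)
    (η : Fin 7 → Fin 7 → Fin 7 → ℝ)
    (hη : ∀ i j k, η i j k =
      ∑ p, (h i p * phi p j k + h j p * phi i p k + h k p * phi i j p)) :
    (∀ i a, ∑ j, ∑ k, η i j k * phi a j k = 4 * h i a) ∧
    (∀ a, ∑ i, ∑ j, ∑ k, η i j k * psi a i j k = 0) := by
  constructor
  · intro i a
    have expand : (∑ j, ∑ k, η i j k * phi a j k)
        = (∑ j, ∑ k, ∑ p, h i p * (phi p j k * phi a j k))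
          + (∑ j, ∑ k, ∑ p, h j p * (phi i p k * phi a j k))
          + (∑ j, ∑ k, ∑ p, h k p * (phi i j p * phi a j k)) := by
      simp only [hη, Finset.sum_mul, add_mul, Finset.sum_add_distrib, mul_assoc]
    rw [expand]
    have T1 : (∑ j, ∑ k, ∑ p, h i p * (phi p j k * phi a j k)) = 6 * h i a := by
      rw [swapA (fun j k p => h i p * (phi p j k * phi a j k))]
      have e : ∀ p, (∑ j, ∑ k, h i p * (phi p j k * phi a j k))
          = h i p * (6 * kdelta p a) := by
        intro p
        simp only [← Finset.mul_sum]
        rw [K1 p a]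
      simp only [e]
      rw [delta_sum 6 (h i) a]
    have T2 : (∑ j, ∑ k, ∑ p, h j p * (phi i p k * phi a j k)) = - h i a := by
      rw [swapB (fun j k p => h j p * (phi i p k * phi a j k))]
      have e : ∀ j p, (∑ k, h j p * (phi i p k * phi a j k))
          = h j p * (kdelta i a * kdelta p j - kdelta i j * kdelta p a + psi i p a j) := by
        intro j p
        rw [← Finset.mul_sum, K2 i p a j]
      simp only [e]
      exact helper2 h hsym htr i a
    have T3 : (∑ j, ∑ k, ∑ p, h k p * (phi i j p * phi a j k)) = - h i a := by
      have r1 : (∑ j, ∑ k, ∑ p, h k p * (phi i j p * phi a j k))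
          = ∑ k, ∑ j, ∑ p, h k p * (phi i j p * phi a j k) := Finset.sum_comm
      rw [r1, swapB (fun k j p => h k p * (phi i j p * phi a j k))]
      have e : ∀ k p, (∑ j, h k p * (phi i j p * phi a j k))
          = h k p * (kdelta i a * kdelta p k - kdelta i k * kdelta p a + psi i p a k) := by
        intro k p
        rw [← Finset.mul_sum, ← K2 i p a k]
        congr 1
        refine Finset.sum_congr rfl fun j _ => ?_
        rw [phi_anti i j p, phi_anti a j k]
        ring
      simp only [e]
      exact helper2 h hsym htr i a
    rw [T1, T2, T3]
    ring
  · intro a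
    have expand : (∑ i, ∑ j, ∑ k, η i j k * psi a i j k)
        = (∑ i, ∑ j, ∑ k, ∑ p, h i p * (phi p j k * psi a i j k))
          + (∑ i, ∑ j, ∑ k, ∑ p, h j p * (phi i p k * psi a i j k))
          + (∑ i, ∑ j, ∑ k, ∑ p, h k p * (phi i j p * psi a i j k)) := by
      simp only [hη, Finset.sum_mul, add_mul, Finset.sum_add_distrib, mul_assoc]
    rw [expand]
    have Z : ∀ (x : Fin 7 → Fin 7 → ℝ), (∀ u v, x u v = x v u) →
        (∑ u, ∑ p, x u p * (4 * phi a u p)) = 0 := by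
      intro x hx
      refine sym_anti x (fun u p => 4 * phi a u p) hx ?_
      intro u p
      show 4 * phi a u p = -(4 * phi a p u)
      rw [phi_anti a u p]
      ring
    have U1 : (∑ i, ∑ j, ∑ k, ∑ p, h i p * (phi p j k * psi a i j k)) = 0 := by
      have r1 : ∀ i, (∑ j, ∑ k, ∑ p, h i p * (phi p j k * psi a i j k))
          = ∑ p, ∑ j, ∑ k, h i p * (phi p j k * psi a i j k) :=
        fun i => swapA (fun j k p => h i p * (phi p j k * psi a i j k))
      simp only [r1, ← Finset.mul_sum]
      simp only [K3a]
      exact Z h hsym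
    have U2 : (∑ i, ∑ j, ∑ k, ∑ p, h j p * (phi i p k * psi a i j k)) = 0 := by
      have r1 : (∑ i, ∑ j, ∑ k, ∑ p, h j p * (phi i p k * psi a i j k))
          = ∑ j, ∑ i, ∑ k, ∑ p, h j p * (phi i p k * psi a i j k) := Finset.sum_comm
      rw [r1]
      have r2 : ∀ j, (∑ i, ∑ k, ∑ p, h j p * (phi i p k * psi a i j k))
          = ∑ p, ∑ i, ∑ k, h j p * (phi i p k * psi a i j k) :=
        fun j => swapA (fun i k p => h j p * (phi i p k * psi a i j k))
      simp only [r2, ← Finset.mul_sum]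
      simp only [K3b]
      exact Z h hsym
    have U3 : (∑ i, ∑ j, ∑ k, ∑ p, h k p * (phi i j p * psi a i j k)) = 0 := by
      have r0 : ∀ i, (∑ j, ∑ k, ∑ p, h k p * (phi i j p * psi a i j k))
          = ∑ k, ∑ j, ∑ p, h k p * (phi i j p * psi a i j k) := fun i => Finset.sum_comm
      simp only [r0]
      have r1 : (∑ i, ∑ k, ∑ j, ∑ p, h k p * (phi i j p * psi a i j k))
          = ∑ k, ∑ i, ∑ j, ∑ p, h k p * (phi i j p * psi a i j k) := Finset.sum_comm
      rw [r1]
      have r2 : ∀ k, (∑ i, ∑ j, ∑ p, h k p * (phi i j p * psi a i j k))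
          = ∑ p, ∑ i, ∑ j, h k p * (phi i j p * psi a i j k) :=
        fun k => swapA (fun i j p => h k p * (phi i j p * psi a i j k))
      simp only [r2, ← Finset.mul_sum]
      simp only [K3c]
      exact Z h hsym
    rw [U1, U2, U3]
    ring
end

section
/- The real vector space su(3) ⊕ su(2) is the internal direct sum su(2)_d ⊕ ℝ·C ⊕ m of the diagonal subalgebra su(2)_d, the line spanned by C, and the 7-dimensional subspace m = span_ℝ{e₁,…,e₇}, and these three subspaces are pairwise orthogonal with respect to the Killing form B. -/
open Complex Matrix

/-- 3×3 complex matrices. -/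
abbrev M3 := Matrix (Fin 3) (Fin 3) ℂ
/-- 2×2 complex matrices. -/
abbrev M2 := Matrix (Fin 2) (Fin 2) ℂ

/-- The Killing form of `su(3) ⊕ su(2)`:
`B((X₁,X₂),(Y₁,Y₂)) = 6 Re tr(X₁Y₁) + 4 Re tr(X₂Y₂)`. -/
noncomputable def killingB (x y : M3 × M2) : ℝ :=
  6 * ((x.1 * y.1).trace).re + 4 * ((x.2 * y.2).trace).re

/-- The real Lie algebra `su(3)` of traceless skew-Hermitian 3×3 matrices,
as a real subspace of `M3`. -/
noncomputable def su3 : Submodule ℝ M3 where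
  carrier := {X | Xᴴ = -X ∧ X.trace = 0}
  zero_mem' := by constructor <;> simp
  add_mem' := by
    rintro a b ⟨ha1, ha2⟩ ⟨hb1, hb2⟩
    exact ⟨by rw [conjTranspose_add, ha1, hb1, neg_add], by rw [trace_add, ha2, hb2, add_zero]⟩
  smul_mem' := by
    rintro c a ⟨ha1, ha2⟩
    constructor
    · rw [conjTranspose_smul, ha1, star_trivial, smul_neg]
    · rw [trace_smul, ha2, smul_zero]

/-- The real Lie algebra `su(2)` of traceless skew-Hermitian 2×2 matrices,
as a real subspace of `M2`. -/
noncomputable def su2 : Submodule ℝ M2 where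
  carrier := {X | Xᴴ = -X ∧ X.trace = 0}
  zero_mem' := by constructor <;> simp
  add_mem' := by
    rintro a b ⟨ha1, ha2⟩ ⟨hb1, hb2⟩
    exact ⟨by rw [conjTranspose_add, ha1, hb1, neg_add], by rw [trace_add, ha2, hb2, add_zero]⟩
  smul_mem' := by
    rintro c a ⟨ha1, ha2⟩
    constructor
    · rw [conjTranspose_smul, ha1, star_trivial, smul_neg]
    · rw [trace_smul, ha2, smul_zero]

/-- The embedding of a 2×2 matrix as the top-left block of a 3×3 matrix. -/
def embed (a : M2) : M3 := !![a 0 0, a 0 1, 0; a 1 0, a 1 1, 0; 0, 0, 0]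

lemma embed_add (a b : M2) : embed (a + b) = embed a + embed b := by
  ext i j
  fin_cases i <;> fin_cases j <;> simp [embed, Matrix.vecHead, Matrix.vecTail]

lemma embed_smul (c : ℝ) (a : M2) : embed (c • a) = c • embed a := by
  ext i j
  fin_cases i <;> fin_cases j <;> simp [embed, Matrix.vecHead, Matrix.vecTail]

lemma embed_zero : embed 0 = 0 := by
  ext i j
  fin_cases i <;> fin_cases j <;> simp [embed, Matrix.vecHead, Matrix.vecTail]

/-- The diagonal subalgebra `su(2)_d = {(ā, a) : a ∈ su(2)} ⊆ su(3) ⊕ su(2)`,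
as a real subspace of `M3 × M2`. -/
noncomputable def su2d : Submodule ℝ (M3 × M2) where
  carrier := {p | ∃ a : M2, aᴴ = -a ∧ a.trace = 0 ∧ p = (embed a, a)}
  zero_mem' := ⟨0, by simp, by simp, Prod.ext (by simp [embed_zero]) (by simp)⟩
  add_mem' := by
    rintro p q ⟨a, ha1, ha2, rfl⟩ ⟨b, hb1, hb2, rfl⟩
    refine ⟨a + b, ?_, ?_, ?_⟩
    · rw [conjTranspose_add, ha1, hb1, neg_add]
    · rw [trace_add, ha2, hb2, add_zero]
    · rw [embed_add, Prod.mk_add_mk]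
  smul_mem' := by
    rintro c p ⟨a, ha1, ha2, rfl⟩
    refine ⟨c • a, ?_, ?_, ?_⟩
    · rw [conjTranspose_smul, ha1, star_trivial, smul_neg]
    · rw [trace_smul, ha2, smul_zero]
    · rw [embed_smul, Prod.smul_mk]

noncomputable def Imat : M2 := !![I, 0; 0, -I]
noncomputable def Jmat : M2 := !![0, -1; 1, 0]
noncomputable def Kmat : M2 := !![0, I; I, 0]

/-- The element `C = (diag(i, i, −2i), 0)`. -/
noncomputable def Celt : M3 × M2 := (!![I, 0, 0; 0, I, 0; 0, 0, -2*I], 0)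

/-- The line `ℝ·C`. -/
noncomputable def lineC : Submodule ℝ (M3 × M2) := Submodule.span ℝ {Celt}

/-- The seven elements `e₁,…,e₇` of `su(3) ⊕ su(2)` (0-indexed as `e 0,…,e 6`). -/
noncomputable def e : Fin 7 → M3 × M2 := ![
  (1/3 : ℝ) • ((!![2*I, 0, 0; 0, -2*I, 0; 0, 0, 0], (-3 : ℝ) • Imat) : M3 × M2),
  (1/3 : ℝ) • ((!![0, -2, 0; 2, 0, 0; 0, 0, 0], (-3 : ℝ) • Jmat) : M3 × M2),
  (1/3 : ℝ) • ((!![0, 2*I, 0; 2*I, 0, 0; 0, 0, 0], (-3 : ℝ) • Kmat) : M3 × M2),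
  (Real.sqrt 5 / 3) • ((!![0, 0, (Real.sqrt 2 : ℂ); 0, 0, 0; -(Real.sqrt 2 : ℂ), 0, 0],
    0) : M3 × M2),
  (Real.sqrt 5 / 3) • ((!![0, 0, (Real.sqrt 2 : ℂ) * I; 0, 0, 0; (Real.sqrt 2 : ℂ) * I, 0, 0],
    0) : M3 × M2),
  (Real.sqrt 5 / 3) • ((!![0, 0, 0; 0, 0, (Real.sqrt 2 : ℂ); 0, -(Real.sqrt 2 : ℂ), 0],
    0) : M3 × M2),
  (Real.sqrt 5 / 3) • ((!![0, 0, 0; 0, 0, (Real.sqrt 2 : ℂ) * I; 0, (Real.sqrt 2 : ℂ) * I, 0],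
    0) : M3 × M2)]

/-- The 7-dimensional subspace `m = span_ℝ{e₁,…,e₇}`. -/
noncomputable def msub : Submodule ℝ (M3 × M2) := Submodule.span ℝ (Set.range e)

/-!
On `su(3) ⊕ su(2)` the form `B` is negative definite, `B(x, x) = -6 ‖X‖² - 4 ‖Y‖²`, so pairwise
`B`-orthogonal subspaces meet trivially, and the `eₖ`, being `B`-orthogonal with
`B(eₖ, eₖ) = -40/3`, are linearly independent. The orthogonality relations are trace computations:
`e₁, e₂, e₃` are `((2/3) ā, -a)` for `a = I, J, K`, orthogonal to `su(2)_d` because `6 · 2/3 = 4`,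
while `e₄, …, e₇` span the off-diagonal block. Spanning is explicit: a traceless skew-Hermitian `X`
is the embedding of its (trace-corrected) top-left block, plus a multiple of `C`, plus its
off-diagonal block, and `(Ā, Y) = (c̄, c) + ((2/3) d̄, -d)` with `c = (3A + 2Y)/5`,
`d = 3(A - Y)/5`.
-/

open scoped ComplexOrder

section ConjTransposeTrace

variable {m n : Type*} [Fintype m] [Fintype n]

lemma Matrix.re_trace_conjTranspose_mul_self_nonneg (A : Matrix m n ℂ) :
    0 ≤ (Aᴴ * A).trace.re :=
  (Complex.nonneg_iff.mp (posSemidef_conjTranspose_mul_self A).trace_nonneg).1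

lemma Matrix.re_trace_conjTranspose_mul_self_eq_zero_iff {A : Matrix m n ℂ} :
    (Aᴴ * A).trace.re = 0 ↔ A = 0 := by
  refine ⟨fun h ↦ trace_conjTranspose_mul_self_eq_zero_iff.mp (Complex.ext h ?_), ?_⟩
  · exact (Complex.nonneg_iff.mp (posSemidef_conjTranspose_mul_self A).trace_nonneg).2.symm
  · rintro rfl
    simp

lemma Matrix.re_trace_mul_self_of_conjTranspose_eq_neg {X : Matrix n n ℂ} (hX : Xᴴ = -X) :
    (X * X).trace.re = -(Xᴴ * X).trace.re := by
  rw [hX, neg_mul, trace_neg, Complex.neg_re, neg_neg]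

end ConjTransposeTrace

lemma LinearMap.BilinForm.inf_sup_eq_bot_of_anisotropicOn {R M : Type*} [CommRing R]
    [AddCommGroup M] [Module R M] {B : LinearMap.BilinForm R M} {P U V W : Submodule R M}
    (hP : ∀ x ∈ P, B x x = 0 → x = 0) (hU : U ≤ P)
    (hV : ∀ u ∈ U, ∀ v ∈ V, B u v = 0) (hW : ∀ u ∈ U, ∀ w ∈ W, B u w = 0) :
    U ⊓ (V ⊔ W) = ⊥ := by
  rw [eq_bot_iff]
  rintro x ⟨hxU, hxVW⟩
  obtain ⟨v, hv, w, hw, hvw⟩ := Submodule.mem_sup.mp hxVW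
  refine (Submodule.mem_bot R).mpr (hP x (hU hxU) ?_)
  rw [← hvw, map_add, hV _ (hvw ▸ hxU) v hv, hW _ (hvw ▸ hxU) w hw, add_zero]

lemma killingB_comm (x y : M3 × M2) : killingB x y = killingB y x := by
  rw [killingB, killingB, trace_mul_comm x.1, trace_mul_comm x.2]

noncomputable def killingBForm : LinearMap.BilinForm ℝ (M3 × M2) :=
  LinearMap.mk₂ ℝ killingB
    (fun x y z ↦ by simp only [killingB, Prod.fst_add, Prod.snd_add, add_mul, trace_add,
      Complex.add_re]; ring)
    (fun c x y ↦ by simp only [killingB, Prod.smul_fst, Prod.smul_snd, smul_mul_assoc,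
      trace_smul, Complex.smul_re, smul_eq_mul]; ring)
    (fun x y z ↦ by simp only [killingB, Prod.fst_add, Prod.snd_add, mul_add, trace_add,
      Complex.add_re]; ring)
    (fun c x y ↦ by simp only [killingB, Prod.smul_fst, Prod.smul_snd, mul_smul_comm,
      trace_smul, Complex.smul_re, smul_eq_mul]; ring)

@[simp]
lemma killingBForm_apply (x y : M3 × M2) : killingBForm x y = killingB x y := rfl

lemma eq_zero_of_killingB_self_eq_zero {x : M3 × M2} (hx : x ∈ su3.prod su2)
    (h : killingB x x = 0) : x = 0 := by
  obtain ⟨⟨hX, -⟩, ⟨hY, -⟩⟩ := hx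
  rw [killingB, re_trace_mul_self_of_conjTranspose_eq_neg hX,
    re_trace_mul_self_of_conjTranspose_eq_neg hY] at h
  have hX0 := re_trace_conjTranspose_mul_self_nonneg x.1
  have hY0 := re_trace_conjTranspose_mul_self_nonneg x.2
  exact Prod.ext (re_trace_conjTranspose_mul_self_eq_zero_iff.mp (by linarith))
    (re_trace_conjTranspose_mul_self_eq_zero_iff.mp (by linarith))

lemma apply_eq_neg_star_of_conjTranspose_eq_neg {n : Type*} {X : Matrix n n ℂ} (hX : Xᴴ = -X)
    (i j : n) : X j i = -star (X i j) := by
  have h := congrFun (congrFun hX i) j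
  rw [conjTranspose_apply, neg_apply] at h
  rw [← star_star (X j i), h, star_neg]

lemma embed_neg (a : M2) : embed (-a) = -embed a := by
  simpa using embed_smul (-1) a

lemma embed_mul_embed (a b : M2) : embed a * embed b = embed (a * b) := by
  ext i j
  fin_cases i <;> fin_cases j <;> simp [embed, mul_apply, Fin.sum_univ_succ]

lemma trace_embed (a : M2) : (embed a).trace = a.trace := by
  simp [embed, trace, Fin.sum_univ_succ]

lemma conjTranspose_embed (a : M2) : (embed a)ᴴ = embed aᴴ := by
  ext i j
  fin_cases i <;> fin_cases j <;> simp [embed]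

lemma embed_mem_su3 {a : M2} (ha : a ∈ su2) : embed a ∈ su3 :=
  ⟨by rw [conjTranspose_embed, ha.1, embed_neg], by rw [trace_embed, ha.2]⟩

lemma Celt_fst_mul_embed (a : M2) : Celt.1 * embed a = I • embed a := by
  ext i j
  fin_cases i <;> fin_cases j <;> simp [Celt, embed, mul_apply, Fin.sum_univ_succ]

lemma Imat_mem : Imat ∈ su2 := by
  constructor
  · ext i j; fin_cases i <;> fin_cases j <;> simp [Imat]
  · simp [Imat, trace]

lemma Jmat_mem : Jmat ∈ su2 := by
  constructor
  · ext i j; fin_cases i <;> fin_cases j <;> simp [Jmat]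
  · simp [Jmat, trace]

lemma Kmat_mem : Kmat ∈ su2 := by
  constructor
  · ext i j; fin_cases i <;> fin_cases j <;> simp [Kmat]
  · simp [Kmat, trace]

lemma Celt_mem : Celt ∈ su3.prod su2 := by
  refine ⟨⟨?_, ?_⟩, zero_mem su2⟩
  · ext i j; fin_cases i <;> fin_cases j <;> simp [Celt]
  · simp [Celt, trace_fin_three, two_mul]

lemma Celt_ne_zero : Celt ≠ 0 := by
  intro h
  simpa [Celt] using congrFun (congrFun (congrArg Prod.fst h) 0) 0

@[simp]
lemma Celt_snd : Celt.2 = 0 := rfl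

noncomputable def su2Compl : M2 →ₗ[ℝ] M3 × M2 where
  toFun b := ((2 / 3 : ℝ) • embed b, -b)
  map_add' a b := by rw [embed_add, smul_add, neg_add, Prod.mk_add_mk]
  map_smul' c b := by
    rw [embed_smul, smul_comm, RingHom.id_apply, Prod.smul_mk, smul_neg]

def offBlockMatrix (z w : ℂ) : M3 := !![0, 0, z; 0, 0, w; -star z, -star w, 0]

lemma offBlockMatrix_add (z w z' w' : ℂ) :
    offBlockMatrix (z + z') (w + w') = offBlockMatrix z w + offBlockMatrix z' w' := by
  ext i j
  fin_cases i <;> fin_cases j <;> simp [offBlockMatrix, add_comm]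

lemma offBlockMatrix_smul (c : ℝ) (z w : ℂ) :
    offBlockMatrix (c • z) (c • w) = c • offBlockMatrix z w := by
  ext i j
  fin_cases i <;> fin_cases j <;> simp [offBlockMatrix]

noncomputable def offBlock : ℂ × ℂ →ₗ[ℝ] M3 × M2 where
  toFun p := (offBlockMatrix p.1 p.2, 0)
  map_add' p q := by rw [Prod.fst_add, Prod.snd_add, offBlockMatrix_add, Prod.mk_add_mk, add_zero]
  map_smul' c p := by
    rw [Prod.smul_fst, Prod.smul_snd, offBlockMatrix_smul, RingHom.id_apply, Prod.smul_mk,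
      smul_zero]

lemma su2Compl_mem {b : M2} (hb : b ∈ su2) : su2Compl b ∈ su3.prod su2 :=
  ⟨su3.smul_mem _ (embed_mem_su3 hb), su2.neg_mem hb⟩

lemma offBlock_mem (p : ℂ × ℂ) : offBlock p ∈ su3.prod su2 := by
  refine ⟨⟨?_, ?_⟩, zero_mem su2⟩
  · ext i j; fin_cases i <;> fin_cases j <;> simp [offBlock, offBlockMatrix]
  · simp [offBlock, offBlockMatrix, trace, Fin.sum_univ_succ]

lemma killingB_su2d_Celt {a : M2} (ha : a.trace = 0) : killingB (embed a, a) Celt = 0 := by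
  rw [killingB_comm]
  simp [killingB, Celt_fst_mul_embed, trace_embed, ha]

lemma killingB_su2d_su2Compl (a b : M2) : killingB (embed a, a) (su2Compl b) = 0 := by
  simp only [killingB, su2Compl, LinearMap.coe_mk, AddHom.coe_mk, mul_smul_comm, mul_neg,
    embed_mul_embed, trace_smul, trace_neg, trace_embed, Complex.smul_re, Complex.neg_re,
    smul_eq_mul]
  ring

lemma killingB_su2d_offBlock (a : M2) (p : ℂ × ℂ) : killingB (embed a, a) (offBlock p) = 0 := by
  simp [killingB, offBlock, offBlockMatrix, embed, trace, Fin.sum_univ_succ]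

lemma killingB_Celt_su2Compl {b : M2} (hb : b.trace = 0) : killingB Celt (su2Compl b) = 0 := by
  simp [killingB, su2Compl, Celt_fst_mul_embed, trace_embed, hb]

lemma killingB_Celt_offBlock (p : ℂ × ℂ) : killingB Celt (offBlock p) = 0 := by
  simp [killingB, offBlock, offBlockMatrix, Celt, trace, Fin.sum_univ_succ]

lemma eq_combination_of_mem_su2 {b : M2} (hb : b ∈ su2) :
    b = (b 0 0).im • Imat + (b 1 0).re • Jmat + (b 1 0).im • Kmat := by
  obtain ⟨hskew, htr⟩ := hb
  have h00 := apply_eq_neg_star_of_conjTranspose_eq_neg hskew 0 0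
  have h01 := apply_eq_neg_star_of_conjTranspose_eq_neg hskew 1 0
  have h11 : b 1 1 = -b 0 0 := by
    simp only [trace, Fin.sum_univ_two, diag_apply] at htr
    linear_combination htr
  ext i j
  fin_cases i <;> fin_cases j <;>
    simp [Imat, Jmat, Kmat, Complex.ext_iff] at h00 h01 h11 ⊢ <;> grind

lemma e_eq_su2Compl : e 0 = su2Compl Imat ∧ e 1 = su2Compl Jmat ∧ e 2 = su2Compl Kmat := by
  refine ⟨?_, ?_, ?_⟩ <;> refine Prod.ext ?_ ?_ <;> ext i j <;> fin_cases i <;> fin_cases j <;>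
    simp [e, su2Compl, embed, Imat, Jmat, Kmat] <;> ring

lemma e_eq_offBlock :
    e 3 = (√5 / 3 * √2) • offBlock (1, 0) ∧ e 4 = (√5 / 3 * √2) • offBlock (I, 0) ∧
      e 5 = (√5 / 3 * √2) • offBlock (0, 1) ∧ e 6 = (√5 / 3 * √2) • offBlock (0, I) := by
  refine ⟨?_, ?_, ?_, ?_⟩ <;> refine Prod.ext ?_ ?_ <;> ext i j <;> fin_cases i <;> fin_cases j <;>
    simp [e, offBlock, offBlockMatrix] <;> ring

lemma offBlock_eq_combination (p : ℂ × ℂ) :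
    offBlock p = p.1.re • offBlock (1, 0) + p.1.im • offBlock (I, 0) +
      p.2.re • offBlock (0, 1) + p.2.im • offBlock (0, I) := by
  simp only [← map_smul, ← map_add]
  congr 1
  ext <;> simp

lemma msub_eq : msub = su2.map su2Compl ⊔ LinearMap.range offBlock := by
  obtain ⟨h0, h1, h2⟩ := e_eq_su2Compl
  obtain ⟨h3, h4, h5, h6⟩ := e_eq_offBlock
  have hc : √5 / 3 * √2 ≠ 0 := by positivity
  have he : ∀ k, e k ∈ msub := fun k ↦ Submodule.subset_span ⟨k, rfl⟩
  apply le_antisymm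
  · rw [msub, Submodule.span_le]
    rintro _ ⟨k, rfl⟩
    fin_cases k
    · exact Submodule.mem_sup_left ⟨Imat, Imat_mem, h0.symm⟩
    · exact Submodule.mem_sup_left ⟨Jmat, Jmat_mem, h1.symm⟩
    · exact Submodule.mem_sup_left ⟨Kmat, Kmat_mem, h2.symm⟩
    · exact Submodule.mem_sup_right ⟨_, (map_smul offBlock _ _).trans h3.symm⟩
    · exact Submodule.mem_sup_right ⟨_, (map_smul offBlock _ _).trans h4.symm⟩
    · exact Submodule.mem_sup_right ⟨_, (map_smul offBlock _ _).trans h5.symm⟩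
    · exact Submodule.mem_sup_right ⟨_, (map_smul offBlock _ _).trans h6.symm⟩
  · refine sup_le ?_ ?_
    · rintro _ ⟨b, hb, rfl⟩
      rw [eq_combination_of_mem_su2 hb, map_add, map_add, map_smul, map_smul, map_smul, ← h0, ← h1,
        ← h2]
      exact add_mem (add_mem (msub.smul_mem _ (he 0)) (msub.smul_mem _ (he 1)))
        (msub.smul_mem _ (he 2))
    · rintro _ ⟨p, rfl⟩
      have hoff : ∀ k q, e k = (√5 / 3 * √2) • offBlock q → offBlock q ∈ msub := fun k q hk ↦
        (msub.smul_mem_iff hc).mp (hk ▸ he k)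
      rw [offBlock_eq_combination]
      exact add_mem (add_mem (add_mem (msub.smul_mem _ (hoff 3 _ h3))
        (msub.smul_mem _ (hoff 4 _ h4))) (msub.smul_mem _ (hoff 5 _ h5)))
        (msub.smul_mem _ (hoff 6 _ h6))

noncomputable def traceFreeBlock (X : M3) : M2 :=
  !![X 0 0 + X 2 2 / 2, X 0 1; X 1 0, X 1 1 + X 2 2 / 2]

lemma traceFreeBlock_mem {X : M3} (hX : X ∈ su3) : traceFreeBlock X ∈ su2 := by
  obtain ⟨hskew, htr⟩ := hX
  have h := apply_eq_neg_star_of_conjTranspose_eq_neg hskew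
  have h00 := h 0 0; have h11 := h 1 1; have h22 := h 2 2; have h01 := h 0 1
  simp only [trace, Fin.sum_univ_three, diag_apply] at htr
  constructor
  · ext i j
    fin_cases i <;> fin_cases j <;> simp [traceFreeBlock, Complex.ext_iff] at h00 h11 h22 h01 ⊢ <;>
      grind
  · simp only [traceFreeBlock, trace, Fin.sum_univ_two, diag_apply, of_apply, cons_val',
      cons_val_zero, cons_val_one, empty_val', cons_val_fin_one]
    linear_combination htr

lemma eq_embed_traceFreeBlock_add {X : M3} (hX : X ∈ su3) (Y : M2) :
    (X, Y) = (embed (traceFreeBlock X), Y) + (-(X 2 2).im / 2) • Celt +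
      offBlock (X 0 2, X 1 2) := by
  obtain ⟨hskew, htr⟩ := hX
  have h := apply_eq_neg_star_of_conjTranspose_eq_neg hskew
  have h22 := h 2 2; have h02 := h 0 2; have h12 := h 1 2
  refine Prod.ext ?_ (by simp [offBlock])
  ext i j
  fin_cases i <;> fin_cases j <;>
    simp [embed, traceFreeBlock, Celt, offBlock, offBlockMatrix, Complex.ext_iff]
      at h22 h02 h12 ⊢ <;>
    grind

lemma embed_prod_eq_add_su2Compl (A Y : M2) :
    (embed A, Y) = (embed ((3 / 5 : ℝ) • A + (2 / 5 : ℝ) • Y), (3 / 5 : ℝ) • A + (2 / 5 : ℝ) • Y) +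
      su2Compl ((3 / 5 : ℝ) • (A - Y)) := by
  refine Prod.ext ?_ ?_
  · simp only [su2Compl, LinearMap.coe_mk, AddHom.coe_mk, Prod.fst_add, ← embed_add, ← embed_smul]
    congr 1
    module
  · simp only [su2Compl, LinearMap.coe_mk, AddHom.coe_mk, Prod.snd_add]
    module

lemma su2d_le : su2d ≤ su3.prod su2 := by
  rintro _ ⟨a, hskew, htr, rfl⟩
  exact ⟨embed_mem_su3 ⟨hskew, htr⟩, hskew, htr⟩

lemma lineC_le : lineC ≤ su3.prod su2 :=
  (Submodule.span_singleton_le_iff_mem _ _).mpr Celt_mem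

lemma msub_le : msub ≤ su3.prod su2 := by
  rw [msub_eq]
  refine sup_le ?_ ?_
  · rintro _ ⟨b, hb, rfl⟩
    exact su2Compl_mem hb
  · rintro _ ⟨p, rfl⟩
    exact offBlock_mem p

lemma le_su2d_sup_lineC_sup_msub : su3.prod su2 ≤ su2d ⊔ lineC ⊔ msub := by
  rintro ⟨X, Y⟩ ⟨hX, hY⟩
  have hA := traceFreeBlock_mem hX
  have ha : (3 / 5 : ℝ) • traceFreeBlock X + (2 / 5 : ℝ) • Y ∈ su2 :=
    add_mem (su2.smul_mem _ hA) (su2.smul_mem _ hY)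
  rw [eq_embed_traceFreeBlock_add hX, embed_prod_eq_add_su2Compl, msub_eq]
  refine add_mem (add_mem (add_mem ?_ ?_) ?_) ?_
  · exact Submodule.mem_sup_left (Submodule.mem_sup_left ⟨_, ha.1, ha.2, rfl⟩)
  · exact Submodule.mem_sup_right
      (Submodule.mem_sup_left ⟨_, su2.smul_mem _ (sub_mem hA hY), rfl⟩)
  · exact Submodule.mem_sup_left (Submodule.mem_sup_right
      (Submodule.smul_mem _ _ (Submodule.mem_span_singleton_self Celt)))
  · exact Submodule.mem_sup_right (Submodule.mem_sup_right ⟨_, rfl⟩)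

lemma killingB_su2d_lineC : ∀ x ∈ su2d, ∀ y ∈ lineC, killingB x y = 0 := by
  rintro _ ⟨a, -, ha, rfl⟩ y hy
  obtain ⟨c, rfl⟩ := Submodule.mem_span_singleton.mp hy
  rw [← killingBForm_apply, map_smul, killingBForm_apply, killingB_su2d_Celt ha, smul_zero]

lemma killingB_su2d_msub : ∀ x ∈ su2d, ∀ y ∈ msub, killingB x y = 0 := by
  rintro _ ⟨a, -, -, rfl⟩ y hy
  rw [msub_eq] at hy
  obtain ⟨_, ⟨b, -, rfl⟩, _, ⟨p, rfl⟩, rfl⟩ := Submodule.mem_sup.mp hy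
  rw [← killingBForm_apply, map_add, killingBForm_apply, killingBForm_apply,
    killingB_su2d_su2Compl, killingB_su2d_offBlock, add_zero]

lemma killingB_lineC_msub : ∀ x ∈ lineC, ∀ y ∈ msub, killingB x y = 0 := by
  intro x hx y hy
  obtain ⟨c, rfl⟩ := Submodule.mem_span_singleton.mp hx
  rw [msub_eq] at hy
  obtain ⟨_, ⟨b, hb, rfl⟩, _, ⟨p, rfl⟩, rfl⟩ := Submodule.mem_sup.mp hy
  simp only [← killingBForm_apply, map_add, LinearMap.map_smul₂]
  simp only [killingBForm_apply, killingB_Celt_su2Compl hb.2, killingB_Celt_offBlock, add_zero,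
    smul_zero]

lemma killingB_comm_of_forall {U V : Set (M3 × M2)} (h : ∀ x ∈ U, ∀ y ∈ V, killingB x y = 0) :
    ∀ y ∈ V, ∀ x ∈ U, killingB y x = 0 :=
  fun y hy x hx ↦ (killingB_comm y x).trans (h x hx y hy)

set_option maxHeartbeats 1000000 in
lemma killingB_e_e (i j : Fin 7) : killingB (e i) (e j) = if i = j then -40 / 3 else 0 := by
  have h5 : √5 ^ 2 = 5 := Real.sq_sqrt (by norm_num)
  have h2 : √2 ^ 2 = 2 := Real.sq_sqrt (by norm_num)
  fin_cases i <;> fin_cases j <;>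
    simp [killingB, e, Imat, Jmat, Kmat, trace, Fin.sum_univ_succ] <;> nlinarith [h5, h2]

lemma finrank_msub : Module.finrank ℝ msub = 7 := by
  have hind : LinearIndependent ℝ e :=
    LinearMap.BilinForm.linearIndependent_of_iIsOrtho (B := killingBForm)
      (fun i j hij ↦ (killingB_e_e i j).trans (if_neg hij)) (fun i ↦ by simp [killingB_e_e])
  rw [msub, finrank_span_eq_card hind, Fintype.card_fin]

/-- `su(3) ⊕ su(2)` is the internal direct sum `su(2)_d ⊕ ℝ·C ⊕ m`, and the three summands
are pairwise orthogonal with respect to the Killing form `B`. -/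
theorem su3_su2_direct_sum_decomposition :
    (su2d ⊔ lineC ⊔ msub = su3.prod su2) ∧
    (su2d ⊓ (lineC ⊔ msub) = ⊥) ∧
    (lineC ⊓ (su2d ⊔ msub) = ⊥) ∧
    (msub ⊓ (su2d ⊔ lineC) = ⊥) ∧
    (Module.finrank ℝ lineC = 1) ∧
    (Module.finrank ℝ msub = 7) ∧
    (∀ x ∈ su2d, ∀ y ∈ lineC, killingB x y = 0) ∧
    (∀ x ∈ su2d, ∀ y ∈ msub, killingB x y = 0) ∧
    (∀ x ∈ lineC, ∀ y ∈ msub, killingB x y = 0) := by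
  have hdef : ∀ x ∈ su3.prod su2, killingBForm x x = 0 → x = 0 :=
    fun _ ↦ eq_zero_of_killingB_self_eq_zero
  refine ⟨le_antisymm (sup_le (sup_le su2d_le lineC_le) msub_le) le_su2d_sup_lineC_sup_msub,
    ?_, ?_, ?_, finrank_span_singleton Celt_ne_zero, finrank_msub,
    killingB_su2d_lineC, killingB_su2d_msub, killingB_lineC_msub⟩
  · exact LinearMap.BilinForm.inf_sup_eq_bot_of_anisotropicOn hdef su2d_le
      killingB_su2d_lineC killingB_su2d_msub
  · exact LinearMap.BilinForm.inf_sup_eq_bot_of_anisotropicOn hdef lineC_le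
      (killingB_comm_of_forall killingB_su2d_lineC) killingB_lineC_msub
  · exact LinearMap.BilinForm.inf_sup_eq_bot_of_anisotropicOn hdef msub_le
      (killingB_comm_of_forall killingB_su2d_msub) (killingB_comm_of_forall killingB_lineC_msub)
end
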